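/- Let α : Sym⁺(n) → Sym⁺(n) be a function on the cone of symmetric positive definite n×n real matrices such that X⁻¹ # Y = α(X)⁻¹ # α(Y) for all X, Y ∈ Sym⁺(n), where # denotes the matrix geometric mean. Then there exists a positive real number λ such that α(X) = λ X for all X ∈ Sym⁺(n). -/

import Mathlib

open Matrix
open scoped Classical

/-- The unique symmetric positive semidefinite square root of a positive semidefinite
real matrix (junk value `0` for matrices that are not positive semidefinite). -/
noncomputable def msqrt {n : ℕ} (A : Matrix (Fin n) (Fin n) ℝ) :
    Matrix (Fin n) (Fin n) ℝ :=
  if h : A.PosSemidef then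
    (h.1.eigenvectorUnitary : Matrix (Fin n) (Fin n) ℝ) *
      diagonal ((↑) ∘ (Real.sqrt ∘ h.1.eigenvalues)) *
      (star h.1.eigenvectorUnitary : Matrix (Fin n) (Fin n) ℝ)
  else 0

/-- The geometric mean `A # B = A^{1/2} (A^{-1/2} B A^{-1/2})^{1/2} A^{1/2}` of two
symmetric positive definite matrices `A` and `B` (here `A^{-1/2} = (A^{1/2})⁻¹`). -/
noncomputable def gmean {n : ℕ} (A B : Matrix (Fin n) (Fin n) ℝ) :
    Matrix (Fin n) (Fin n) ℝ :=
  msqrt A * msqrt ((msqrt A)⁻¹ * B * (msqrt A)⁻¹) * msqrt A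


/-! The Riccati characterisation of the geometric mean (`X⁻¹ # Y` is the unique positive definite
`G` with `G X G = Y`) turns the hypothesis into `α Y = G (α X) G`. Taking `X = 1` gives
`α Y = √Y A √Y` with `A = α 1`, and taking `Y = Z X Z` (so that `G = Z`) gives
`α (Z X Z) = Z (α X) Z`. Hence `√(Z X Z) A √(Z X Z) = Z √X A √X Z` for all positive definite
`Z`, `X`. Testing this on a `2 × 2` example placed in the coordinates `i`, `j`, for which
`Z √X = √(Z X Z) U` with `U` a rotation by an angle that is not a multiple of `π / 2`, forces
`A i j = 0` and `A i i = A j j`. So `A = λ • 1` and `α X = λ • X`. -/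

open scoped MatrixOrder

namespace Matrix

variable {ι κ ρ : Type*} [Fintype ι] [DecidableEq ι] [Fintype κ] [DecidableEq κ]
  [Fintype ρ] [DecidableEq ρ]

lemma PosDef.mul_mul_same_of_posDef {A B : Matrix ι ι ℝ} (hA : A.PosDef) (hB : B.PosDef) :
    (B * A * B).PosDef := by
  have h := hA.conjTranspose_mul_mul_same (mulVec_injective_of_isUnit hB.isUnit)
  rwa [hB.1.eq] at h

lemma posDef_fin_two {a b d : ℝ} (ha : 0 < a) (hdet : 0 < a * d - b * b) :
    !![a, b; b, d].PosDef := by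
  refine .of_dotProduct_mulVec_pos (by ext i j; fin_cases i <;> fin_cases j <;> rfl) fun x hx => ?_
  simp only [dotProduct, mulVec, Fin.sum_univ_two, Pi.star_apply, star_trivial, of_apply,
    cons_val', cons_val_zero, cons_val_one, empty_val', cons_val_fin_one]
  -- `a` times the quadratic form is `(a x₀ + b x₁)² + (a d - b²) x₁²`
  rcases eq_or_ne (x 1) 0 with h1 | h1
  · have h0 : x 0 ≠ 0 := fun h0 => hx (funext fun i => by fin_cases i <;> simp [h0, h1])
    simp only [h1]
    nlinarith [mul_self_pos.2 h0]
  · nlinarith [sq_nonneg (a * x 0 + b * x 1), mul_pos hdet (mul_self_pos.2 h1)]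

lemma PosDef.fromBlocks_zero {A : Matrix κ κ ℝ} {D : Matrix ρ ρ ℝ} (hA : A.PosDef)
    (hD : D.PosDef) : (fromBlocks A 0 0 D).PosDef := by
  have := hA.isUnit.invertible
  have hsemi : (fromBlocks A 0 0ᴴ D).PosSemidef := by
    rw [hA.fromBlocks₁₁]
    simpa using hD.posSemidef
  rw [conjTranspose_zero] at hsemi
  refine hsemi.posDef_iff_det_ne_zero.2 ?_
  rw [det_fromBlocks_zero₂₁]
  exact mul_ne_zero hA.det_pos.ne' hD.det_pos.ne'

lemma sqrt_submatrix_equiv (e : κ ≃ ι) {M : Matrix ι ι ℝ} (hM : M.PosSemidef) :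
    CFC.sqrt (M.submatrix e e) = (CFC.sqrt M).submatrix e e :=
  CFC.sqrt_unique (by rw [submatrix_mul_equiv, CFC.sqrt_mul_sqrt_self M hM.nonneg])
    ((CFC.sqrt_nonneg M).posSemidef.submatrix e).nonneg

lemma sqrt_fromBlocks_zero {A : Matrix κ κ ℝ} {D : Matrix ρ ρ ℝ} (hA : A.PosDef)
    (hD : D.PosDef) :
    CFC.sqrt (fromBlocks A 0 0 D) = fromBlocks (CFC.sqrt A) 0 0 (CFC.sqrt D) :=
  CFC.sqrt_unique
    (by rw [fromBlocks_multiply]; simp [CFC.sqrt_mul_sqrt_self A hA.posSemidef.nonneg,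
      CFC.sqrt_mul_sqrt_self D hD.posSemidef.nonneg])
    (PosDef.fromBlocks_zero hA.isStrictlyPositive.sqrt.posDef
      hD.isStrictlyPositive.sqrt.posDef).posSemidef.nonneg

omit [DecidableEq κ] [DecidableEq ρ] in
lemma toBlocks₁₁_fromBlocks_zero_mul_mul (P : Matrix κ κ ℝ) (Q : Matrix ρ ρ ℝ)
    (A : Matrix (κ ⊕ ρ) (κ ⊕ ρ) ℝ) :
    (fromBlocks P 0 0 Q * A * fromBlocks P 0 0 Q).toBlocks₁₁ = P * A.toBlocks₁₁ * P := by
  conv_lhs => rw [← fromBlocks_toBlocks A]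
  simp [fromBlocks_multiply]

lemma eq_of_mul_mul_eq_mul_mul {X Z Z' : Matrix ι ι ℝ} (hX : X.PosDef) (hZ : Z.PosDef)
    (hZ' : Z'.PosDef) (h : Z * X * Z = Z' * X * Z') : Z = Z' := by
  set R := CFC.sqrt X
  have hR : R.PosDef := hX.isStrictlyPositive.sqrt.posDef
  have hRR : R * R = X := CFC.sqrt_mul_sqrt_self X hX.posSemidef.nonneg
  have hsq : ∀ W : Matrix ι ι ℝ, (R * W * R) ^ 2 = R * (W * X * W) * R := fun W => by
    rw [sq, ← hRR]; simp only [mul_assoc]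
  have hRZR : R * Z * R = R * Z' * R :=
    (CFC.sq_eq_sq_iff _ _ (hZ.mul_mul_same_of_posDef hR).posSemidef.nonneg
      (hZ'.mul_mul_same_of_posDef hR).posSemidef.nonneg).1 (by rw [hsq, hsq, h])
  exact hR.isUnit.mul_right_inj.1 (hR.isUnit.mul_left_inj.1 hRZR)

end Matrix

section SqrtConj

variable {ι κ ρ : Type*} [Fintype ι] [DecidableEq ι] [Fintype κ] [DecidableEq κ]
  [Fintype ρ] [DecidableEq ρ]

noncomputable def sqrtConj (A Y : Matrix ι ι ℝ) : Matrix ι ι ℝ :=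
  CFC.sqrt Y * A * CFC.sqrt Y

def SqrtConjEquivariant (A : Matrix ι ι ℝ) : Prop :=
  ∀ Z X : Matrix ι ι ℝ, Z.PosDef → X.PosDef → sqrtConj A (Z * X * Z) = Z * sqrtConj A X * Z

lemma sqrtConj_smul_one (c : ℝ) {Y : Matrix ι ι ℝ} (hY : Y.PosSemidef) :
    sqrtConj (c • 1) Y = c • Y := by
  rw [sqrtConj, mul_smul_comm, mul_one, smul_mul_assoc, CFC.sqrt_mul_sqrt_self Y hY.nonneg]

lemma sqrtConj_submatrix_equiv (e : κ ≃ ι) (A : Matrix ι ι ℝ) {Y : Matrix ι ι ℝ}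
    (hY : Y.PosSemidef) : sqrtConj (A.submatrix e e) (Y.submatrix e e) =
      (sqrtConj A Y).submatrix e e := by
  rw [sqrtConj, sqrtConj, sqrt_submatrix_equiv e hY, submatrix_mul_equiv, submatrix_mul_equiv]

lemma toBlocks₁₁_sqrtConj_fromBlocks (A : Matrix (κ ⊕ ρ) (κ ⊕ ρ) ℝ) {Y : Matrix κ κ ℝ}
    (hY : Y.PosDef) :
    (sqrtConj A (fromBlocks Y 0 0 1)).toBlocks₁₁ = sqrtConj A.toBlocks₁₁ Y := by
  rw [sqrtConj, sqrt_fromBlocks_zero hY PosDef.one, CFC.sqrt_one,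
    toBlocks₁₁_fromBlocks_zero_mul_mul, sqrtConj]

lemma SqrtConjEquivariant.submatrix_equiv {A : Matrix ι ι ℝ} (hA : SqrtConjEquivariant A)
    (e : κ ≃ ι) : SqrtConjEquivariant (A.submatrix e e) := by
  intro Z X hZ hX
  obtain ⟨Z, rfl⟩ : ∃ Z' : Matrix ι ι ℝ, Z'.submatrix e e = Z :=
    ⟨Z.submatrix e.symm e.symm, by simp⟩
  obtain ⟨X, rfl⟩ : ∃ X' : Matrix ι ι ℝ, X'.submatrix e e = X :=
    ⟨X.submatrix e.symm e.symm, by simp⟩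
  have hZ' : Z.PosDef := by simpa using hZ.submatrix e.symm.injective
  have hX' : X.PosDef := by simpa using hX.submatrix e.symm.injective
  rw [submatrix_mul_equiv, submatrix_mul_equiv,
    sqrtConj_submatrix_equiv e A (hX'.mul_mul_same_of_posDef hZ').posSemidef,
    sqrtConj_submatrix_equiv e A hX'.posSemidef, hA Z X hZ' hX', submatrix_mul_equiv,
    submatrix_mul_equiv]

lemma SqrtConjEquivariant.toBlocks₁₁ {A : Matrix (κ ⊕ ρ) (κ ⊕ ρ) ℝ}
    (hA : SqrtConjEquivariant A) : SqrtConjEquivariant A.toBlocks₁₁ := by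
  intro Z X hZ hX
  have h := congrArg Matrix.toBlocks₁₁ (hA (fromBlocks Z 0 0 1) (fromBlocks X 0 0 1)
    (hZ.fromBlocks_zero PosDef.one) (hX.fromBlocks_zero PosDef.one))
  simp only [fromBlocks_multiply] at h
  simpa [toBlocks₁₁_sqrtConj_fromBlocks A (hX.mul_mul_same_of_posDef hZ),
    toBlocks₁₁_sqrtConj_fromBlocks A hX, toBlocks₁₁_fromBlocks_zero_mul_mul] using h

/-- The witness is `Z = !![17, 16; 16, 18]`, `X = !![5, -3; -3, 2]`: then `√X = !![2, -1; -1, 1]`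
and `√(Z X Z) = !![15, 10; 10, 10]`, and `Z √X = √(Z X Z) U` for the rotation `U` with
`cos θ = 4/5`, so equivariance at `(Z, X)` says `B = U B Uᵀ`. -/
lemma SqrtConjEquivariant.fin_two {B : Matrix (Fin 2) (Fin 2) ℝ} (hB : B.IsHermitian)
    (h : SqrtConjEquivariant B) : B 0 1 = 0 ∧ B 0 0 = B 1 1 := by
  have hZ : !![(17 : ℝ), 16; 16, 18].PosDef := posDef_fin_two (by norm_num) (by norm_num)
  have hX : !![(5 : ℝ), -3; -3, 2].PosDef := posDef_fin_two (by norm_num) (by norm_num)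
  have hsqrtX : CFC.sqrt !![(5 : ℝ), -3; -3, 2] = !![2, -1; -1, 1] :=
    CFC.sqrt_unique (by norm_num)
      (posDef_fin_two (by norm_num) (by norm_num)).posSemidef.nonneg
  have hsqrtZXZ : CFC.sqrt (!![(17 : ℝ), 16; 16, 18] * !![5, -3; -3, 2] * !![17, 16; 16, 18])
      = !![15, 10; 10, 10] :=
    CFC.sqrt_unique (by norm_num)
      (posDef_fin_two (by norm_num) (by norm_num)).posSemidef.nonneg
  have hsymm : B 1 0 = B 0 1 := by simpa using hB.apply 0 1
  have e := h _ _ hZ hX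
  rw [sqrtConj, sqrtConj, hsqrtX, hsqrtZXZ, eta_fin_two B] at e
  simp only [mul_fin_two, hsymm] at e
  have e00 := congrFun (congrFun e 0) 0
  have e11 := congrFun (congrFun e 1) 1
  simp only [of_apply, cons_val', cons_val_zero, cons_val_one, cons_val_fin_one] at e00 e11
  constructor <;> linarith

def finTwoEquivPair {i j : ι} (hij : i ≠ j) : Fin 2 ≃ {k // k = i ∨ k = j} where
  toFun p := ⟨![i, j] p, by fin_cases p <;> simp⟩
  invFun k := if k.1 = i then 0 else 1
  left_inv p := by fin_cases p <;> simp [hij.symm]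
  right_inv := by rintro ⟨k, rfl | rfl⟩ <;> simp [hij.symm]

def finTwoSumComplEquiv {i j : ι} (hij : i ≠ j) : Fin 2 ⊕ {k // ¬(k = i ∨ k = j)} ≃ ι :=
  (Equiv.sumCongr (finTwoEquivPair hij) (Equiv.refl _)).trans (Equiv.sumCompl _)

lemma SqrtConjEquivariant.apply_eq_zero_and_diag_eq {A : Matrix ι ι ℝ} (hA : A.IsHermitian)
    (h : SqrtConjEquivariant A) {i j : ι} (hij : i ≠ j) : A i j = 0 ∧ A i i = A j j := by
  set e := finTwoSumComplEquiv hij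
  have hB : (A.submatrix e e).toBlocks₁₁.IsHermitian := hA.submatrix (e ∘ Sum.inl)
  -- `e (inl 0) = i` and `e (inl 1) = j` hold by `rfl`
  exact (h.submatrix_equiv e).toBlocks₁₁.fin_two hB

lemma SqrtConjEquivariant.exists_eq_smul_one {A : Matrix ι ι ℝ} (hA : A.PosDef)
    (h : SqrtConjEquivariant A) : ∃ c : ℝ, 0 < c ∧ A = c • 1 := by
  cases isEmpty_or_nonempty ι with
  | inl _ => exact ⟨1, one_pos, Subsingleton.elim _ _⟩
  | inr hne =>
    obtain ⟨i⟩ := hne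
    refine ⟨A i i, hA.diag_pos, ?_⟩
    ext k l
    obtain rfl | hkl := eq_or_ne k l
    · obtain rfl | hki := eq_or_ne k i
      · simp
      · simp [(h.apply_eq_zero_and_diag_eq hA.1 hki).2]
    · simp [hkl, (h.apply_eq_zero_and_diag_eq hA.1 hkl).1]

end SqrtConj

section GeometricMean

variable {n : ℕ}

lemma msqrt_eq_sqrt {A : Matrix (Fin n) (Fin n) ℝ} (hA : A.PosSemidef) :
    msqrt A = CFC.sqrt A := by
  rw [CFC.sqrt_eq_real_sqrt A hA.nonneg, cfcₙ_eq_cfc, hA.1.cfc_eq, msqrt, dif_pos hA]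
  simp only [Matrix.IsHermitian.cfc, Unitary.conjStarAlgAut_apply]
  rfl

lemma gmean_one_left (Y : Matrix (Fin n) (Fin n) ℝ) : gmean 1 Y = msqrt Y := by
  simp [gmean, msqrt_eq_sqrt PosSemidef.one]

lemma gmean_inv_eq {X Y : Matrix (Fin n) (Fin n) ℝ} (hX : X.PosDef) (hY : Y.PosDef) :
    gmean X⁻¹ Y = (CFC.sqrt X)⁻¹ * CFC.sqrt (CFC.sqrt X * Y * CFC.sqrt X) * (CFC.sqrt X)⁻¹ := by
  have hR : (CFC.sqrt X).PosDef := hX.isStrictlyPositive.sqrt.posDef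
  have := hR.isUnit.invertible
  rw [gmean, msqrt_eq_sqrt hX.inv.posSemidef, ← hX.posSemidef.inv_sqrt, inv_inv_of_invertible,
    msqrt_eq_sqrt (hY.mul_mul_same_of_posDef hR).posSemidef]

lemma posDef_gmean_inv {X Y : Matrix (Fin n) (Fin n) ℝ} (hX : X.PosDef) (hY : Y.PosDef) :
    (gmean X⁻¹ Y).PosDef := by
  have hR : (CFC.sqrt X).PosDef := hX.isStrictlyPositive.sqrt.posDef
  rw [gmean_inv_eq hX hY]
  exact (hY.mul_mul_same_of_posDef hR).isStrictlyPositive.sqrt.posDef.mul_mul_same_of_posDef hR.inv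

lemma gmean_inv_mul_mul_gmean_inv {X Y : Matrix (Fin n) (Fin n) ℝ} (hX : X.PosDef)
    (hY : Y.PosDef) : gmean X⁻¹ Y * X * gmean X⁻¹ Y = Y := by
  set R := CFC.sqrt X
  have hR : R.PosDef := hX.isStrictlyPositive.sqrt.posDef
  have := hR.isUnit.invertible
  have hRR : R * R = X := CFC.sqrt_mul_sqrt_self X hX.posSemidef.nonneg
  have hT := CFC.sqrt_mul_sqrt_self (R * Y * R) (hY.mul_mul_same_of_posDef hR).posSemidef.nonneg
  rw [gmean_inv_eq hX hY]
  set T := CFC.sqrt (R * Y * R)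
  calc R⁻¹ * T * R⁻¹ * X * (R⁻¹ * T * R⁻¹) = R⁻¹ * (T * T) * R⁻¹ := by
        rw [← hRR]
        simp only [mul_assoc, inv_mul_cancel_left_of_invertible, mul_inv_cancel_left_of_invertible]
    _ = Y := by
        rw [hT]
        simp only [mul_assoc, inv_mul_cancel_left_of_invertible, mul_inv_of_invertible, mul_one]

lemma gmean_inv_mul_mul {X Z : Matrix (Fin n) (Fin n) ℝ} (hX : X.PosDef) (hZ : Z.PosDef) :
    gmean X⁻¹ (Z * X * Z) = Z :=
  have hZXZ := hX.mul_mul_same_of_posDef hZ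
  eq_of_mul_mul_eq_mul_mul hX (posDef_gmean_inv hX hZXZ) hZ (gmean_inv_mul_mul_gmean_inv hX hZXZ)

end GeometricMean

/-- If `α : Sym⁺(n) → Sym⁺(n)` satisfies `X⁻¹ # Y = α(X)⁻¹ # α(Y)` for all
`X, Y ∈ Sym⁺(n)`, where `#` is the matrix geometric mean, then `α` is a positive
scalar multiple of the identity: `α(X) = λ X` for some `λ > 0`. -/
theorem statement15 (n : ℕ)
    (α : Matrix (Fin n) (Fin n) ℝ → Matrix (Fin n) (Fin n) ℝ)
    (hmap : ∀ X, X.PosDef → (α X).PosDef)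
    (hα : ∀ X Y, X.PosDef → Y.PosDef → gmean X⁻¹ Y = gmean (α X)⁻¹ (α Y)) :
    ∃ lam : ℝ, 0 < lam ∧ ∀ X, X.PosDef → α X = lam • X := by
  have hcongr : ∀ X Y, X.PosDef → Y.PosDef → gmean X⁻¹ Y * α X * gmean X⁻¹ Y = α Y :=
    fun X Y hX hY => by
      rw [hα X Y hX hY]
      exact gmean_inv_mul_mul_gmean_inv (hmap X hX) (hmap Y hY)
  have hsqrtConj : ∀ Y, Y.PosDef → α Y = sqrtConj (α 1) Y := fun Y hY => by
    simpa [gmean_one_left, msqrt_eq_sqrt hY.posSemidef, sqrtConj] using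
      (hcongr 1 Y PosDef.one hY).symm
  have hequiv : SqrtConjEquivariant (α 1) := fun Z X hZ hX => by
    have hZXZ := hX.mul_mul_same_of_posDef hZ
    rw [← hsqrtConj _ hZXZ, ← hsqrtConj X hX, ← hcongr X _ hX hZXZ, gmean_inv_mul_mul hX hZ]
  obtain ⟨c, hc, hA⟩ := hequiv.exists_eq_smul_one (hmap 1 PosDef.one)
  exact ⟨c, hc, fun X hX => by rw [hsqrtConj X hX, hA, sqrtConj_smul_one c hX.posSemidef]⟩
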